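/- arXiv:2211.03306 — 6 statements merged into one kernel-verified Lean document; each statement's English description precedes it below -/
import Mathlib

section
/- With the setup above, for any edge set E_i with weights w_i, the expected weighted-density of p̂ equals the LP value: ∑_{j∈[ℓ]} p̂_{S_j} · w_i(S_j)/|S_j| = ∑_{e∈E_i} w_i(e)·x̂_e, where w_i(S) = ∑_{e∈E_i, e⊆S} w_i(e) and x̂_e = min(ŷ_u, ŷ_v). -/
open Finset

lemma tele_aux (r : ℕ → ℝ) (k : ℕ) :
    ∑ j ∈ Finset.Icc 1 k, (r j - r (j - 1)) = r k - r 0 := by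
  induction k with
  | zero => simp
  | succ n ih =>
      rw [Finset.sum_Icc_succ_top (by omega), ih]
      simp only [Nat.add_sub_cancel]
      ring

theorem stmt_1 {V : Type*} [Fintype V] [DecidableEq V]
    (y : V → ℝ) (hy : ∀ v, 0 ≤ y v) (hsum : ∑ v, y v = 1)
    (ℓ : ℕ) (r : ℕ → ℝ) (hr0 : r 0 = 0)
    (hmono : ∀ j j', j < j' → j' ≤ ℓ → r j < r j')
    (hvals : ∀ v, 0 < y v → ∃ j, 1 ≤ j ∧ j ≤ ℓ ∧ y v = r j)
    (hsurj : ∀ j, 1 ≤ j → j ≤ ℓ → ∃ v, y v = r j)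
    (E : Finset (V × V)) (w : V × V → ℝ) (hw : ∀ e ∈ E, 0 < w e) :
    ∑ j ∈ Finset.Icc 1 ℓ,
      ((r j - r (j - 1)) *
          ((Finset.univ.filter (fun v => r j ≤ y v)).card : ℝ)) *
        ((∑ e ∈ E.filter (fun e =>
              e.1 ∈ Finset.univ.filter (fun v => r j ≤ y v) ∧
              e.2 ∈ Finset.univ.filter (fun v => r j ≤ y v)), w e) /
          ((Finset.univ.filter (fun v => r j ≤ y v)).card : ℝ)) =
      ∑ e ∈ E, w e * min (y e.1) (y e.2) := by
  have hmono' : ∀ j j', j ≤ j' → j' ≤ ℓ → r j ≤ r j' := by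
    intro j j' h h'
    rcases lt_or_eq_of_le h with h | h
    · exact (hmono j j' h h').le
    · exact h ▸ le_rfl
  have hrpos : ∀ j, 1 ≤ j → j ≤ ℓ → 0 < r j := fun j h1 h2 => hr0 ▸ hmono 0 j h1 h2
  have step1 : ∀ j ∈ Finset.Icc 1 ℓ,
      ((r j - r (j - 1)) *
          ((Finset.univ.filter (fun v => r j ≤ y v)).card : ℝ)) *
        ((∑ e ∈ E.filter (fun e =>
              e.1 ∈ Finset.univ.filter (fun v => r j ≤ y v) ∧
              e.2 ∈ Finset.univ.filter (fun v => r j ≤ y v)), w e) /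
          ((Finset.univ.filter (fun v => r j ≤ y v)).card : ℝ)) =
      ∑ e ∈ E, if (r j ≤ y e.1 ∧ r j ≤ y e.2) then (r j - r (j - 1)) * w e else 0 := by
    intro j hj
    simp only [Finset.mem_Icc] at hj
    obtain ⟨v, hv⟩ := hsurj j hj.1 hj.2
    have hvmem : v ∈ Finset.univ.filter (fun v => r j ≤ y v) := by
      simp [hv]
    have hc : ((Finset.univ.filter (fun v => r j ≤ y v)).card : ℝ) ≠ 0 := by
      exact_mod_cast (Finset.card_pos.mpr ⟨v, hvmem⟩).ne'
    rw [← Finset.sum_filter]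
    have hfe : E.filter (fun e =>
              e.1 ∈ Finset.univ.filter (fun v => r j ≤ y v) ∧
              e.2 ∈ Finset.univ.filter (fun v => r j ≤ y v)) =
        E.filter (fun e => r j ≤ y e.1 ∧ r j ≤ y e.2) := by
      apply Finset.filter_congr
      intro e _
      simp
    rw [hfe, mul_assoc, ← mul_div_assoc, mul_div_cancel_left₀ _ hc, Finset.mul_sum]
  rw [Finset.sum_congr rfl step1, Finset.sum_comm]
  apply Finset.sum_congr rfl
  intro e he
  have key : ∑ j ∈ Finset.Icc 1 ℓ,
      (if r j ≤ min (y e.1) (y e.2) then (r j - r (j - 1)) else 0)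
      = min (y e.1) (y e.2) := by
    rcases eq_or_lt_of_le (le_min (hy e.1) (hy e.2)) with h0 | h0
    · rw [← h0]
      apply Finset.sum_eq_zero
      intro j hj
      simp only [Finset.mem_Icc] at hj
      exact if_neg (not_le.mpr (hrpos j hj.1 hj.2))
    · obtain ⟨j1, hj11, hj1ℓ, hv1⟩ := hvals e.1 (lt_of_lt_of_le h0 (min_le_left _ _))
      obtain ⟨j2, hj21, hj2ℓ, hv2⟩ := hvals e.2 (lt_of_lt_of_le h0 (min_le_right _ _))
      set k := min j1 j2 with hk
      have hkℓ : k ≤ ℓ := le_trans (min_le_left _ _) hj1ℓ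
      have hk1 : 1 ≤ k := le_min hj11 hj21
      have hrk : r k = min (y e.1) (y e.2) := by
        rcases le_total j1 j2 with h | h
        · have hk' : k = j1 := min_eq_left h
          rw [hk', hv1, hv2, min_eq_left (hmono' j1 j2 h hj2ℓ)]
        · have hk' : k = j2 := min_eq_right h
          rw [hk', hv1, hv2, min_eq_right (hmono' j2 j1 h hj1ℓ)]
      have hfilter : (Finset.Icc 1 ℓ).filter (fun j => r j ≤ min (y e.1) (y e.2)) =
          Finset.Icc 1 k := by
        ext j
        simp only [Finset.mem_filter, Finset.mem_Icc, ← hrk]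
        constructor
        · rintro ⟨⟨h1, h2⟩, h3⟩
          refine ⟨h1, ?_⟩
          by_contra h
          exact absurd h3 (not_le.mpr (hmono k j (by omega) h2))
        · rintro ⟨h1, h2⟩
          exact ⟨⟨h1, le_trans h2 hkℓ⟩, hmono' j k h2 hkℓ⟩
      rw [← Finset.sum_filter, hfilter, tele_aux, hr0, sub_zero, hrk]
  calc ∑ j ∈ Finset.Icc 1 ℓ,
      (if (r j ≤ y e.1 ∧ r j ≤ y e.2) then (r j - r (j - 1)) * w e else 0)
      = (∑ j ∈ Finset.Icc 1 ℓ,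
          (if r j ≤ min (y e.1) (y e.2) then (r j - r (j - 1)) else 0)) * w e := by
        rw [Finset.sum_mul]
        apply Finset.sum_congr rfl
        intro j _
        rw [ite_mul, zero_mul]
        exact if_congr le_min_iff.symm rfl rfl
    _ = w e * min (y e.1) (y e.2) := by rw [key, mul_comm]
end

section
/- The optimal value of the LP — maximize t subject to t ≤ α_i ∑_{e∈E_i} w_i(e) x_e + β_i for all i ∈ [k], x_e ≤ y_u and x_e ≤ y_v for every edge e = {u,v}, ∑_v y_v = 1, and x, y ≥ 0 — is greater than or equal to max over probability distributions p on nonempty subsets of V of min over i ∈ [k] of α_i ∑_S p_S w_i(S)/|S| + β_i. -/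
open Finset

theorem stmt_5 {V : Type*} [Fintype V] [DecidableEq V]
    {k : ℕ} [NeZero k]
    (E : Fin k → Finset (V × V)) (w : Fin k → V × V → ℝ)
    (hw : ∀ i, ∀ e ∈ E i, 0 < w i e)
    (α : Fin k → ℝ) (hα : ∀ i, 0 ≤ α i) (β : Fin k → ℝ)
    (p : Finset V → ℝ) (hp0 : ∀ S, 0 ≤ p S)
    (hp1 : ∑ S : Finset V, p S = 1) (hpe : p ∅ = 0) :
    ∃ (x : V × V → ℝ) (y : V → ℝ) (t : ℝ),
      (∀ i, t ≤ α i * (∑ e ∈ E i, w i e * x e) + β i) ∧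
      (∀ i, ∀ e ∈ E i, x e ≤ y e.1 ∧ x e ≤ y e.2) ∧
      (∑ v, y v = 1) ∧
      (∀ e, 0 ≤ x e) ∧ (∀ v, 0 ≤ y v) ∧
      (Finset.univ.inf' Finset.univ_nonempty (fun i =>
          α i * (∑ S : Finset V,
              p S * ((∑ e ∈ (E i).filter (fun e => e.1 ∈ S ∧ e.2 ∈ S), w i e) /
                (S.card : ℝ))) + β i) ≤ t) := by
  classical
  refine ⟨fun e => ∑ S : Finset V, if e.1 ∈ S ∧ e.2 ∈ S then p S / S.card else 0,
    fun v => ∑ S : Finset V, if v ∈ S then p S / S.card else 0,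
    Finset.univ.inf' Finset.univ_nonempty (fun i =>
      α i * (∑ S : Finset V,
          p S * ((∑ e ∈ (E i).filter (fun e => e.1 ∈ S ∧ e.2 ∈ S), w i e) /
            (S.card : ℝ))) + β i),
    ?_, ?_, ?_, ?_, ?_, le_refl _⟩
  · intro i
    have key : ∑ e ∈ E i, w i e *
        (∑ S : Finset V, if e.1 ∈ S ∧ e.2 ∈ S then p S / S.card else 0)
        = ∑ S : Finset V,
          p S * ((∑ e ∈ (E i).filter (fun e => e.1 ∈ S ∧ e.2 ∈ S), w i e) /
            (S.card : ℝ)) := by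
      simp_rw [Finset.mul_sum]
      rw [Finset.sum_comm]
      refine Finset.sum_congr rfl fun S _ => ?_
      simp_rw [mul_ite, mul_zero]
      rw [← Finset.sum_filter, ← Finset.sum_mul]
      ring
    rw [key]
    exact Finset.inf'_le _ (Finset.mem_univ i)
  · intro i e _
    constructor <;>
    · refine Finset.sum_le_sum fun S _ => ?_
      split_ifs with h1 h2
      · exact le_refl _
      · exact absurd (by tauto) h2
      · exact div_nonneg (hp0 S) (Nat.cast_nonneg _)
      · exact le_refl _
  · rw [Finset.sum_comm]
    rw [show (1:ℝ) = ∑ S : Finset V, p S from hp1.symm]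
    refine Finset.sum_congr rfl fun S _ => ?_
    rw [Finset.sum_ite_mem, Finset.univ_inter, Finset.sum_const, nsmul_eq_mul]
    rcases eq_or_ne S ∅ with rfl | hS
    · simp [hpe]
    · have : (S.card : ℝ) ≠ 0 := by
        simpa using Finset.card_ne_zero.mpr (Finset.nonempty_iff_ne_empty.mpr hS)
      field_simp
  · intro e
    refine Finset.sum_nonneg fun S _ => ?_
    split_ifs
    · exact div_nonneg (hp0 S) (Nat.cast_nonneg _)
    · exact le_refl 0
  · intro v
    refine Finset.sum_nonneg fun S _ => ?_
    split_ifs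
    · exact div_nonneg (hp0 S) (Nat.cast_nonneg _)
    · exact le_refl 0
end

section
/- Let ℓ* be a lower bound on the optimal value of the (α,β)-density problem (i.e., on max_p min_i [α_i E_{S∼p}[w_i(S)/|S|] + β_i]). If a vertex v* satisfies α_i · d_i(v*) + β_i < ℓ* for every i ∈ [k], where d_i(v*) = ∑_{e∈E_i : v*∈e} w_i(e) is the weighted degree of v* in layer i, then every optimal solution (x̂, ŷ, t̂) of the LP satisfies ŷ_{v*} = 0. -/
open Finset

theorem stmt_8 {V : Type*} [Fintype V] [DecidableEq V]
    {k : ℕ} [NeZero k]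
    (E : Fin k → Finset (V × V)) (w : Fin k → V × V → ℝ)
    (hw : ∀ i, ∀ e ∈ E i, 0 < w i e)
    (α : Fin k → ℝ) (hα : ∀ i, 0 ≤ α i) (β : Fin k → ℝ)
    (lstar : ℝ)
    -- lstar is a lower bound on the optimal value of the (α,β)-density problem
    (hlb : ∃ p : Finset V → ℝ, (∀ S, 0 ≤ p S) ∧ (∑ S : Finset V, p S = 1) ∧
      lstar ≤ Finset.univ.inf' Finset.univ_nonempty (fun i =>
        α i * (∑ S : Finset V,
            p S * ((∑ e ∈ (E i).filter (fun e => e.1 ∈ S ∧ e.2 ∈ S), w i e) /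
              (S.card : ℝ))) + β i))
    (vstar : V)
    -- the weighted degree of vstar is small in every layer
    (hdeg : ∀ i, α i *
        (∑ e ∈ (E i).filter (fun e => e.1 = vstar ∨ e.2 = vstar), w i e) +
        β i < lstar)
    -- an optimal solution of the LP
    (xh : V × V → ℝ) (yh : V → ℝ) (th : ℝ)
    (hfeas1 : ∀ i, th ≤ α i * (∑ e ∈ E i, w i e * xh e) + β i)
    (hfeas2 : ∀ i, ∀ e ∈ E i, xh e ≤ yh e.1 ∧ xh e ≤ yh e.2)
    (hfeas3 : ∑ v, yh v = 1)
    (hfeas4 : ∀ e, 0 ≤ xh e) (hfeas5 : ∀ v, 0 ≤ yh v)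
    (hopt : ∀ (x : V × V → ℝ) (y : V → ℝ) (t : ℝ),
      (∀ i, t ≤ α i * (∑ e ∈ E i, w i e * x e) + β i) →
      (∀ i, ∀ e ∈ E i, x e ≤ y e.1 ∧ x e ≤ y e.2) →
      (∑ v, y v = 1) → (∀ e, 0 ≤ x e) → (∀ v, 0 ≤ y v) → t ≤ th) :
    yh vstar = 0 := by

  classical
  -- Step 1: lstar ≤ th
  have hlth : lstar ≤ th := by
    obtain ⟨p, hp0, hp1, hplb⟩ := hlb
    set t0 : ℝ := Finset.univ.inf' Finset.univ_nonempty (fun i =>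
        α i * (∑ S : Finset V,
            p S * ((∑ e ∈ (E i).filter (fun e => e.1 ∈ S ∧ e.2 ∈ S), w i e) /
              (S.card : ℝ))) + β i) with ht0
    have key := hopt
      (fun e => ∑ S : Finset V, if e.1 ∈ S ∧ e.2 ∈ S then p S / S.card else 0)
      (fun v => (∑ S : Finset V, if v ∈ S then p S / S.card else 0) +
        (if v = vstar then p ∅ else 0)) t0 ?_ ?_ ?_ ?_ ?_
    · exact le_trans hplb key
    · -- constraint 1
      intro i
      have heq : ∑ e ∈ E i, w i e *
          (∑ S : Finset V, if e.1 ∈ S ∧ e.2 ∈ S then p S / S.card else 0)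
          = ∑ S : Finset V,
            p S * ((∑ e ∈ (E i).filter (fun e => e.1 ∈ S ∧ e.2 ∈ S), w i e) /
              (S.card : ℝ)) := by
        calc ∑ e ∈ E i, w i e *
            (∑ S : Finset V, if e.1 ∈ S ∧ e.2 ∈ S then p S / S.card else 0)
            = ∑ e ∈ E i, ∑ S : Finset V,
              (if e.1 ∈ S ∧ e.2 ∈ S then w i e * (p S / S.card) else 0) := by
              refine Finset.sum_congr rfl fun e _ => ?_
              rw [Finset.mul_sum]
              exact Finset.sum_congr rfl fun S _ => by rw [mul_ite, mul_zero]
          _ = ∑ S : Finset V, ∑ e ∈ E i,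
              (if e.1 ∈ S ∧ e.2 ∈ S then w i e * (p S / S.card) else 0) :=
              Finset.sum_comm
          _ = ∑ S : Finset V, ∑ e ∈ (E i).filter (fun e => e.1 ∈ S ∧ e.2 ∈ S),
              w i e * (p S / S.card) := by
              exact Finset.sum_congr rfl fun S _ => (Finset.sum_filter _ _).symm
          _ = ∑ S : Finset V,
              p S * ((∑ e ∈ (E i).filter (fun e => e.1 ∈ S ∧ e.2 ∈ S), w i e) /
                (S.card : ℝ)) := by
              refine Finset.sum_congr rfl fun S _ => ?_
              rw [← Finset.sum_mul]; ring
      rw [heq]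
      exact Finset.inf'_le _ (Finset.mem_univ i)
    · -- constraint 2
      intro i e he
      have hB : ∀ v : V, (0:ℝ) ≤ if v = vstar then p ∅ else 0 := by
        intro v; split <;> [exact hp0 ∅; exact le_refl 0]
      constructor
      · refine le_trans ?_ (le_add_of_nonneg_right (hB e.1))
        refine Finset.sum_le_sum fun S _ => ?_
        by_cases h1 : e.1 ∈ S ∧ e.2 ∈ S
        · rw [if_pos h1, if_pos h1.1]
        · rw [if_neg h1]
          split
          · exact div_nonneg (hp0 S) (Nat.cast_nonneg _)
          · exact le_refl 0
      · refine le_trans ?_ (le_add_of_nonneg_right (hB e.2))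
        refine Finset.sum_le_sum fun S _ => ?_
        by_cases h1 : e.1 ∈ S ∧ e.2 ∈ S
        · rw [if_pos h1, if_pos h1.2]
        · rw [if_neg h1]
          split
          · exact div_nonneg (hp0 S) (Nat.cast_nonneg _)
          · exact le_refl 0
    · -- constraint 3
      have h1 : ∀ S : Finset V, ∑ v : V, (if v ∈ S then p S / S.card else 0)
          = if S = ∅ then 0 else p S := by
        intro S
        rw [Finset.sum_ite_mem, Finset.univ_inter, Finset.sum_const, nsmul_eq_mul]
        by_cases hS : S = ∅
        · simp [hS]
        · have hc : (S.card : ℝ) ≠ 0 := by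
            simpa using Finset.card_ne_zero_of_mem (Finset.nonempty_iff_ne_empty.mpr hS).choose_spec
          simp only [hS, if_false]
          field_simp
      rw [Finset.sum_add_distrib, Finset.sum_comm]
      have h2 : ∑ S : Finset V, ∑ v : V, (if v ∈ S then p S / S.card else 0)
          = ∑ S : Finset V, (if S = ∅ then 0 else p S) :=
        Finset.sum_congr rfl fun S _ => h1 S
      rw [h2]
      have h3 : ∑ S : Finset V, (if S = ∅ then 0 else p S)
          = ∑ S : Finset V, p S - p ∅ := by
        have : ∀ S : Finset V, (if S = ∅ then 0 else p S)
            = p S - (if S = ∅ then p S else 0) := by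
          intro S; split <;> simp [*]
        rw [Finset.sum_congr rfl fun S _ => this S, Finset.sum_sub_distrib,
          Finset.sum_ite_eq' Finset.univ (∅ : Finset V) p]
        simp
      rw [h3, hp1]
      simp
    · intro e
      refine Finset.sum_nonneg fun S _ => ?_
      split
      · exact div_nonneg (hp0 S) (Nat.cast_nonneg _)
      · exact le_refl 0
    · intro v
      refine add_nonneg (Finset.sum_nonneg fun S _ => ?_) ?_
      · split
        · exact div_nonneg (hp0 S) (Nat.cast_nonneg _)
        · exact le_refl 0
      · split <;> [exact hp0 ∅; exact le_refl 0]
  -- Step 2: contradiction assuming yh vstar ≠ 0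
  by_contra h
  have hε : 0 < yh vstar := (hfeas5 vstar).lt_of_ne (Ne.symm h)
  have hε1 : yh vstar ≤ 1 := by
    rw [← hfeas3]
    exact Finset.single_le_sum (fun v _ => hfeas5 v) (Finset.mem_univ vstar)
  set d : Fin k → ℝ := fun i =>
    ∑ e ∈ (E i).filter (fun e => e.1 = vstar ∨ e.2 = vstar), w i e with hd
  rcases eq_or_lt_of_le hε1 with h1 | h1
  · -- yh vstar = 1
    have hz : ∀ v, v ≠ vstar → yh v = 0 := by
      intro v hv
      have hs : ∑ u ∈ Finset.univ.erase vstar, yh u = 0 := by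
        rw [Finset.sum_erase_eq_sub (Finset.mem_univ vstar), hfeas3, ← h1]
        ring
      have := (Finset.sum_eq_zero_iff_of_nonneg (fun u _ => hfeas5 u)).mp hs v
        (Finset.mem_erase.mpr ⟨hv, Finset.mem_univ v⟩)
      exact this
    set i : Fin k := 0
    have hbd : ∑ e ∈ E i, w i e * xh e ≤ d i := by
      rw [← Finset.sum_filter_add_sum_filter_not (E i)
        (fun e => e.1 = vstar ∨ e.2 = vstar)]
      have ht2 : ∑ e ∈ (E i).filter (fun e => ¬(e.1 = vstar ∨ e.2 = vstar)),
          w i e * xh e = 0 := by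
        refine Finset.sum_eq_zero fun e he => ?_
        rw [Finset.mem_filter] at he
        push_neg at he
        have hx0 : xh e = 0 :=
          le_antisymm (le_trans (hfeas2 i e he.1).1 (le_of_eq (hz e.1 he.2.1)))
            (hfeas4 e)
        rw [hx0, mul_zero]
      rw [ht2, add_zero, hd]
      refine Finset.sum_le_sum fun e he => ?_
      rw [Finset.mem_filter] at he
      have hwpos := hw i e he.1
      have hxle : xh e ≤ 1 := by
        rcases he.2 with h2 | h2
        · calc xh e ≤ yh e.1 := (hfeas2 i e he.1).1
            _ = 1 := by rw [h2, ← h1]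
        · calc xh e ≤ yh e.2 := (hfeas2 i e he.1).2
            _ = 1 := by rw [h2, ← h1]
      nlinarith [hfeas4 e]
    have := hfeas1 i
    have hdi := hdeg i
    have : th ≤ α i * d i + β i := by
      have := mul_le_mul_of_nonneg_left hbd (hα i)
      linarith [hfeas1 i]
    linarith
  · -- yh vstar < 1
    set ε := yh vstar with hεdef
    set c := 1 - ε with hcdef
    have hc : 0 < c := by rw [hcdef]; linarith
    have hine : (Finset.univ : Finset (Fin k)).Nonempty := Finset.univ_nonempty
    set δ : ℝ := Finset.univ.inf' hine (fun i => lstar - (α i * d i + β i)) with hδ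
    have hδpos : 0 < δ := by
      rw [hδ, Finset.lt_inf'_iff]
      intro i _
      linarith [hdeg i]
    have key := hopt
      (fun e => if e.1 = vstar ∨ e.2 = vstar then 0 else xh e / c)
      (fun v => if v = vstar then 0 else yh v / c)
      (th + ε * δ / c) ?_ ?_ ?_ ?_ ?_
    · have : 0 < ε * δ / c := by positivity
      linarith
    · -- constraint 1
      intro i
      have hsplit : ∑ e ∈ E i, w i e *
          (if e.1 = vstar ∨ e.2 = vstar then 0 else xh e / c)
          = (∑ e ∈ (E i).filter (fun e => ¬(e.1 = vstar ∨ e.2 = vstar)),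
              w i e * xh e) / c := by
        rw [← Finset.sum_filter_add_sum_filter_not (E i)
          (fun e => e.1 = vstar ∨ e.2 = vstar), Finset.sum_div]
        have hz1 : ∑ e ∈ (E i).filter (fun e => e.1 = vstar ∨ e.2 = vstar),
            w i e * (if e.1 = vstar ∨ e.2 = vstar then 0 else xh e / c) = 0 := by
          refine Finset.sum_eq_zero fun e he => ?_
          rw [Finset.mem_filter] at he
          simp [he.2]
        rw [hz1, zero_add]
        refine Finset.sum_congr rfl fun e he => ?_
        rw [Finset.mem_filter] at he
        rw [if_neg he.2, mul_div_assoc]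
      rw [hsplit]
      set A := ∑ e ∈ E i, w i e * xh e with hA
      set T := ∑ e ∈ (E i).filter (fun e => e.1 = vstar ∨ e.2 = vstar),
        w i e * xh e with hT
      have hAT : ∑ e ∈ (E i).filter (fun e => ¬(e.1 = vstar ∨ e.2 = vstar)),
          w i e * xh e = A - T := by
        rw [hA, hT, ← Finset.sum_filter_add_sum_filter_not (E i)
          (fun e => e.1 = vstar ∨ e.2 = vstar)]
        ring
      rw [hAT]
      have hTbd : T ≤ ε * d i := by
        rw [hT, hd]
        have : ε * ∑ e ∈ (E i).filter (fun e => e.1 = vstar ∨ e.2 = vstar), w i e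
            = ∑ e ∈ (E i).filter (fun e => e.1 = vstar ∨ e.2 = vstar),
              w i e * ε := by rw [Finset.mul_sum]; exact Finset.sum_congr rfl fun e _ => by ring
        rw [this]
        refine Finset.sum_le_sum fun e he => ?_
        rw [Finset.mem_filter] at he
        have hwpos := (hw i e he.1).le
        have hxle : xh e ≤ ε := by
          rcases he.2 with h2 | h2
          · exact le_trans (hfeas2 i e he.1).1 (le_of_eq (by rw [h2]))
          · exact le_trans (hfeas2 i e he.1).2 (le_of_eq (by rw [h2]))
        exact mul_le_mul_of_nonneg_left hxle hwpos
      have h1' : α i * T ≤ α i * (ε * d i) := mul_le_mul_of_nonneg_left hTbd (hα i)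
      have h2' : ε * δ ≤ ε * (lstar - (α i * d i + β i)) :=
        mul_le_mul_of_nonneg_left (Finset.inf'_le _ (Finset.mem_univ i)) hε.le
      have h3' : ε * lstar ≤ ε * th := mul_le_mul_of_nonneg_left hlth hε.le
      have hthi : th ≤ α i * A + β i := hfeas1 i
      rw [← mul_le_mul_iff_right₀ hc]
      have e1 : c * (th + ε * δ / c) = c * th + ε * δ := by
        field_simp
      have e2 : c * (α i * ((A - T) / c) + β i) = α i * (A - T) + c * β i := by
        field_simp
      rw [e1, e2, hcdef]
      nlinarith [h1', h2', h3', hthi]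
    · -- constraint 2
      intro i e he
      have hy' : ∀ v : V, (0:ℝ) ≤ if v = vstar then 0 else yh v / c := by
        intro v; split
        · exact le_refl 0
        · exact div_nonneg (hfeas5 v) hc.le
      by_cases htouch : e.1 = vstar ∨ e.2 = vstar
      · rw [if_pos htouch]
        exact ⟨hy' e.1, hy' e.2⟩
      · push_neg at htouch
        rw [if_neg (by push_neg; exact htouch)]
        constructor
        · rw [if_neg htouch.1]
          gcongr
          exact (hfeas2 i e he).1
        · rw [if_neg htouch.2]
          gcongr
          exact (hfeas2 i e he).2
    · -- constraint 3
      have : ∀ v : V, (if v = vstar then 0 else yh v / c)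
          = yh v / c - (if v = vstar then yh v / c else 0) := by
        intro v; split <;> simp
      rw [Finset.sum_congr rfl fun v _ => this v, Finset.sum_sub_distrib,
        Finset.sum_ite_eq' Finset.univ vstar (fun v => yh v / c)]
      simp only [Finset.mem_univ, if_true]
      rw [← Finset.sum_div, hfeas3]
      rw [← hεdef]
      field_simp
      exact hcdef.symm
    · intro e
      split
      · exact le_refl 0
      · exact div_nonneg (hfeas4 e) hc.le
    · intro v
      split
      · exact le_refl 0
      · exact div_nonneg (hfeas5 v) hc.le
end

section
/- Let ℓ* be a lower bound on the optimal value of the (α,β)-density problem. Any vertex v* with max_{i∈[k]} [α_i · d_i(v*) + β_i] < ℓ* is not contained in any subset belonging to the support of any optimal distribution p for the (α,β)-density problem. -/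
open Finset

private noncomputable def stmt9dens {V : Type*} [Fintype V] [DecidableEq V] {k : ℕ}
    (E : Fin k → Finset (V × V)) (w : Fin k → V × V → ℝ) (i : Fin k) (S : Finset V) : ℝ :=
  (∑ e ∈ (E i).filter (fun e => e.1 ∈ S ∧ e.2 ∈ S), w i e) / (S.card : ℝ)

private noncomputable def stmt9val {V : Type*} [Fintype V] [DecidableEq V] {k : ℕ}
    (E : Fin k → Finset (V × V)) (w : Fin k → V × V → ℝ)
    (α : Fin k → ℝ) (β : Fin k → ℝ) (i : Fin k) (q : Finset V → ℝ) : ℝ :=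
  α i * (∑ S : Finset V, q S * stmt9dens E w i S) + β i

theorem stmt_9 {V : Type*} [Fintype V] [DecidableEq V]
    {k : ℕ} [NeZero k]
    (E : Fin k → Finset (V × V)) (w : Fin k → V × V → ℝ)
    (hw : ∀ i, ∀ e ∈ E i, 0 < w i e)
    (α : Fin k → ℝ) (hα : ∀ i, 0 ≤ α i) (β : Fin k → ℝ)
    (lstar : ℝ)
    -- lstar is a lower bound on the optimal value of the (α,β)-density problem
    (hlb : ∃ q : Finset V → ℝ, (∀ S, 0 ≤ q S) ∧ (∑ S : Finset V, q S = 1) ∧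
      lstar ≤ Finset.univ.inf' Finset.univ_nonempty (fun i =>
        α i * (∑ S : Finset V,
            q S * ((∑ e ∈ (E i).filter (fun e => e.1 ∈ S ∧ e.2 ∈ S), w i e) /
              (S.card : ℝ))) + β i))
    (vstar : V)
    (hdeg : ∀ i, α i *
        (∑ e ∈ (E i).filter (fun e => e.1 = vstar ∨ e.2 = vstar), w i e) +
        β i < lstar)
    -- p is an optimal distribution for the (α,β)-density problem
    (p : Finset V → ℝ) (hp0 : ∀ S, 0 ≤ p S) (hp1 : ∑ S : Finset V, p S = 1)
    (hpopt : ∀ q : Finset V → ℝ, (∀ S, 0 ≤ q S) → (∑ S : Finset V, q S = 1) →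
      Finset.univ.inf' Finset.univ_nonempty (fun i =>
          α i * (∑ S : Finset V,
              q S * ((∑ e ∈ (E i).filter (fun e => e.1 ∈ S ∧ e.2 ∈ S), w i e) /
                (S.card : ℝ))) + β i) ≤
        Finset.univ.inf' Finset.univ_nonempty (fun i =>
          α i * (∑ S : Finset V,
              p S * ((∑ e ∈ (E i).filter (fun e => e.1 ∈ S ∧ e.2 ∈ S), w i e) /
                (S.card : ℝ))) + β i)) :
    ∀ S : Finset V, p S ≠ 0 → vstar ∉ S := by
  intro S₀ hpS₀ hvS₀
  have hpopt' : ∀ q : Finset V → ℝ, (∀ S, 0 ≤ q S) → (∑ S : Finset V, q S = 1) →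
      Finset.univ.inf' Finset.univ_nonempty (fun i => stmt9val E w α β i q) ≤
      Finset.univ.inf' Finset.univ_nonempty (fun i => stmt9val E w α β i p) := hpopt
  have hlb' : ∃ q : Finset V → ℝ, (∀ S, 0 ≤ q S) ∧ (∑ S : Finset V, q S = 1) ∧
      lstar ≤ Finset.univ.inf' Finset.univ_nonempty (fun i => stmt9val E w α β i q) := hlb
  set m : ℝ := Finset.univ.inf' Finset.univ_nonempty (fun i => stmt9val E w α β i p) with hm
  have hlstar : lstar ≤ m := by
    obtain ⟨q₀, h1, h2, h3⟩ := hlb'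
    exact h3.trans (hpopt' q₀ h1 h2)
  have hm_le : ∀ i, m ≤ stmt9val E w α β i p := fun i => inf'_le _ (mem_univ i)
  have hexist : ∀ q : Finset V → ℝ, (∀ S, 0 ≤ q S) → (∑ S : Finset V, q S = 1) →
      ∃ i, stmt9val E w α β i q ≤ m := by
    intro q h1 h2
    obtain ⟨i, -, hi⟩ := exists_mem_eq_inf' Finset.univ_nonempty (fun i => stmt9val E w α β i q)
    exact ⟨i, hi ▸ hpopt' q h1 h2⟩
  -- Separation argument
  set Q : Set (Finset V → ℝ) := {q | (∀ S, 0 ≤ q S) ∧ ∑ S : Finset V, q S = 1} with hQ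
  set F : (Finset V → ℝ) → (Fin k → ℝ) := fun q i => stmt9val E w α β i q - m with hFdef
  have hUopen : IsOpen (Set.pi Set.univ (fun _ : Fin k => Set.Ioi (0:ℝ))) :=
    isOpen_set_pi Set.finite_univ (fun i _ => isOpen_Ioi)
  have hUconv : Convex ℝ (Set.pi Set.univ (fun _ : Fin k => Set.Ioi (0:ℝ))) :=
    convex_pi (fun i _ => convex_Ioi 0)
  have hCconv : Convex ℝ (F '' Q) := by
    rintro x ⟨q1, hq1, rfl⟩ y ⟨q2, hq2, rfl⟩ a b ha hb hab
    refine ⟨a • q1 + b • q2, ⟨?_, ?_⟩, ?_⟩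
    · intro S
      exact add_nonneg (mul_nonneg ha (hq1.1 S)) (mul_nonneg hb (hq2.1 S))
    · simp only [Pi.add_apply, Pi.smul_apply, smul_eq_mul]
      rw [Finset.sum_add_distrib, ← Finset.mul_sum, ← Finset.mul_sum, hq1.2, hq2.2]
      simpa using hab
    · funext i
      simp only [hFdef, Pi.add_apply, Pi.smul_apply, smul_eq_mul, stmt9val]
      have hsum : ∑ S : Finset V, (a * q1 S + b * q2 S) * stmt9dens E w i S
          = a * ∑ S : Finset V, q1 S * stmt9dens E w i S
            + b * ∑ S : Finset V, q2 S * stmt9dens E w i S := by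
        rw [Finset.mul_sum, Finset.mul_sum, ← Finset.sum_add_distrib]
        exact Finset.sum_congr rfl fun S _ => by ring
      rw [hsum]
      have hb' : b = 1 - a := by linarith
      subst hb'; ring
  have hdisj : Disjoint (Set.pi Set.univ (fun _ : Fin k => Set.Ioi (0:ℝ))) (F '' Q) := by
    rw [Set.disjoint_left]
    rintro x hxU ⟨q, hq, rfl⟩
    obtain ⟨i, hi⟩ := hexist q hq.1 hq.2
    have h0 : (0:ℝ) < F q i := hxU i (Set.mem_univ i)
    have : F q i = stmt9val E w α β i q - m := rfl
    linarith [this ▸ h0]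
  obtain ⟨f, u, hfU, hfC⟩ := geometric_hahn_banach_open hUconv hUopen hCconv hdisj
  set sing : Fin k → (Fin k → ℝ) := fun i => Pi.single i 1 with hsing
  have hrep : ∀ x : Fin k → ℝ, f x = ∑ i, x i * f (sing i) := by
    intro x
    have hx : x = ∑ i, x i • sing i := by
      have := Finset.univ_sum_single x
      rw [← this]
      exact Finset.sum_congr rfl fun i _ => by
        funext j; simp [hsing, Pi.single_apply]
    conv_lhs => rw [hx]
    rw [map_sum]
    exact Finset.sum_congr rfl fun i _ => by rw [map_smul]; simp
  set lam : Fin k → ℝ := fun i => -f (sing i) with hlamdef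
  have honeU : (fun _ : Fin k => (1:ℝ)) ∈ Set.pi Set.univ (fun _ : Fin k => Set.Ioi (0:ℝ)) :=
    fun i _ => Set.mem_Ioi.mpr one_pos
  have hlam0 : ∀ i, 0 ≤ lam i := by
    intro i
    by_contra h
    push_neg at h
    have hc : 0 < f (sing i) := by
      have : lam i = -f (sing i) := rfl
      linarith [this ▸ h]
    set c := f (sing i) with hcdef
    set t := max 0 ((u - f (fun _ : Fin k => 1)) / c) with htdef
    have ht0 : 0 ≤ t := le_max_left _ _
    have haU : ((fun _ : Fin k => (1:ℝ)) + t • sing i) ∈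
        Set.pi Set.univ (fun _ : Fin k => Set.Ioi (0:ℝ)) := by
      intro j _
      simp only [Pi.add_apply, Pi.smul_apply, smul_eq_mul, Set.mem_Ioi]
      have : (0:ℝ) ≤ t * sing i j := by
        apply mul_nonneg ht0
        rcases eq_or_ne j i with rfl | hne
        · simp [hsing]
        · simp [hsing, Pi.single_apply, hne]
      linarith
    have hlt := hfU _ haU
    rw [map_add, map_smul, smul_eq_mul] at hlt
    have htc : u - f (fun _ : Fin k => 1) ≤ t * c := by
      have h1 : (u - f (fun _ : Fin k => 1)) / c ≤ t := le_max_right _ _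
      calc u - f (fun _ : Fin k => 1) = (u - f (fun _ : Fin k => 1)) / c * c := by
            field_simp
        _ ≤ t * c := by
            exact mul_le_mul_of_nonneg_right h1 hc.le
    linarith
  have hu0 : 0 ≤ u := by
    rcases le_or_gt 0 (f (fun _ : Fin k => (1:ℝ))) with h | h
    · linarith [hfU _ honeU]
    · by_contra hu
      push_neg at hu
      have hε : 0 < u / (2 * f (fun _ : Fin k => (1:ℝ))) := by
        apply div_pos_of_neg_of_neg hu; linarith
      have haU : ((u / (2 * f (fun _ : Fin k => (1:ℝ)))) • (fun _ : Fin k => (1:ℝ))) ∈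
          Set.pi Set.univ (fun _ : Fin k => Set.Ioi (0:ℝ)) := by
        intro j _
        simpa using hε
      have hlt := hfU _ haU
      rw [map_smul, smul_eq_mul] at hlt
      have hne : f (fun _ : Fin k => (1:ℝ)) ≠ 0 := ne_of_lt h
      have : u / (2 * f (fun _ : Fin k => (1:ℝ))) * f (fun _ : Fin k => (1:ℝ)) = u / 2 := by
        field_simp
      rw [this] at hlt
      linarith
  have hkey : ∀ q ∈ Q, ∑ i, lam i * (stmt9val E w α β i q - m) ≤ 0 := by
    intro q hq
    have h1 : u ≤ f (F q) := hfC _ ⟨q, hq, rfl⟩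
    rw [hrep] at h1
    have h2 : ∑ i, F q i * f (sing i)
        = -∑ i, lam i * (stmt9val E w α β i q - m) := by
      rw [← Finset.sum_neg_distrib]
      exact Finset.sum_congr rfl fun i _ => by
        simp only [hlamdef, hFdef]; ring
    rw [h2] at h1
    linarith
  have hpQ : p ∈ Q := ⟨hp0, hp1⟩
  have hlampos : ∃ i, 0 < lam i := by
    by_contra h
    push_neg at h
    have hz : ∀ i, f (sing i) = 0 := by
      intro i
      have h1 := h i
      have h2 := hlam0 i
      have : lam i = 0 := le_antisymm h1 h2
      have : -f (sing i) = 0 := this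
      linarith
    have hf0 : ∀ x : Fin k → ℝ, f x = 0 := by
      intro x; rw [hrep]
      exact Finset.sum_eq_zero fun i _ => by rw [hz i, mul_zero]
    have h1 := hfU _ honeU
    have h2 := hfC _ ⟨p, hpQ, rfl⟩
    rw [hf0] at h1
    rw [hf0] at h2
    linarith
  -- numeric phase
  set Λ : ℝ := ∑ i, lam i with hΛdef
  have hΛ : 0 < Λ := by
    obtain ⟨i₀, hi₀⟩ := hlampos
    exact Finset.sum_pos' (fun i _ => hlam0 i) ⟨i₀, mem_univ i₀, hi₀⟩
  set bb : ℝ := ∑ i, lam i * β i with hbbdef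
  set g : Finset V → ℝ := fun S => ∑ i, lam i * (α i * stmt9dens E w i S) with hgdef
  have hexpand : ∀ q : Finset V → ℝ,
      ∑ i, lam i * stmt9val E w α β i q = (∑ S : Finset V, q S * g S) + bb := by
    intro q
    have h1 : ∑ i, lam i * stmt9val E w α β i q
        = (∑ i, lam i * (α i * ∑ S : Finset V, q S * stmt9dens E w i S)) + bb := by
      rw [hbbdef, ← Finset.sum_add_distrib]
      exact Finset.sum_congr rfl fun i _ => by simp only [stmt9val]; ring
    rw [h1]
    congr 1
    have h2 : ∀ i : Fin k, lam i * (α i * ∑ S : Finset V, q S * stmt9dens E w i S)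
        = ∑ S : Finset V, q S * (lam i * (α i * stmt9dens E w i S)) := by
      intro i
      rw [Finset.mul_sum, Finset.mul_sum]
      exact Finset.sum_congr rfl fun S _ => by ring
    rw [Finset.sum_congr rfl fun i _ => h2 i, Finset.sum_comm]
    exact Finset.sum_congr rfl fun S _ => by rw [hgdef, Finset.mul_sum]
  have hkey2 : ∀ q ∈ Q, (∑ S : Finset V, q S * g S) + bb ≤ Λ * m := by
    intro q hq
    have h := hkey q hq
    have h2 : ∑ i, lam i * (stmt9val E w α β i q - m)
        = ((∑ S : Finset V, q S * g S) + bb) - Λ * m := by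
      have : ∀ i : Fin k, lam i * (stmt9val E w α β i q - m)
          = lam i * stmt9val E w α β i q - lam i * m := fun i => by ring
      rw [Finset.sum_congr rfl fun i _ => this i, Finset.sum_sub_distrib,
        hexpand q, ← Finset.sum_mul]
    rw [h2] at h
    linarith
  have hgT : ∀ T : Finset V, g T + bb ≤ Λ * m := by
    intro T
    have hδQ : (fun S => if S = T then (1:ℝ) else 0) ∈ Q := by
      constructor
      · intro S
        by_cases hST : S = T <;> simp [hST]
      · simp
    have h := hkey2 _ hδQ
    have h2 : ∑ S : Finset V, (if S = T then (1:ℝ) else 0) * g S = g T := by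
      simp only [ite_mul, one_mul, zero_mul]
      rw [Finset.sum_ite_eq']
      simp
    rw [h2] at h
    exact h
  have hsum_eq : (∑ S : Finset V, p S * g S) + bb = Λ * m := by
    refine le_antisymm (hkey2 p hpQ) ?_
    have h1 : ∑ i, lam i * m ≤ ∑ i, lam i * stmt9val E w α β i p :=
      Finset.sum_le_sum fun i _ => mul_le_mul_of_nonneg_left (hm_le i) (hlam0 i)
    rw [hexpand p, ← Finset.sum_mul] at h1
    linarith
  have hgS₀ : g S₀ = Λ * m - bb := by
    have hterm : ∀ S ∈ (univ : Finset (Finset V)), 0 ≤ p S * ((Λ * m - bb) - g S) :=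
      fun S _ => mul_nonneg (hp0 S) (by linarith [hgT S])
    have hzero : ∑ S : Finset V, p S * ((Λ * m - bb) - g S) = 0 := by
      have e1 : ∀ c : ℝ, ∑ S : Finset V, p S * (c - g S)
          = (∑ S : Finset V, p S) * c - ∑ S : Finset V, p S * g S := by
        intro c
        rw [Finset.sum_mul, ← Finset.sum_sub_distrib]
        exact Finset.sum_congr rfl fun S _ => by ring
      rw [e1, hp1]
      linarith
    have h := (Finset.sum_eq_zero_iff_of_nonneg hterm).mp hzero S₀ (mem_univ _)
    rcases mul_eq_zero.mp h with h' | h'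
    · exact absurd h' hpS₀
    · linarith
  -- degree bound
  set Dv : Fin k → ℝ :=
    fun i => ∑ e ∈ (E i).filter (fun e => e.1 = vstar ∨ e.2 = vstar), w i e with hDvdef
  have hdeg' : ∀ i, α i * Dv i + β i < lstar := hdeg
  have hDlt : ∑ i, lam i * (α i * Dv i) < Λ * m - bb := by
    obtain ⟨i₀, hi₀⟩ := hlampos
    have h1 : ∑ i, lam i * (α i * Dv i) < ∑ i, lam i * (lstar - β i) := by
      refine Finset.sum_lt_sum
        (fun i _ => mul_le_mul_of_nonneg_left (by linarith [hdeg' i]) (hlam0 i))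
        ⟨i₀, mem_univ _, ?_⟩
      exact mul_lt_mul_of_pos_left (by linarith [hdeg' i₀]) hi₀
    have h2 : ∑ i, lam i * (lstar - β i) = Λ * lstar - bb := by
      have : ∀ i : Fin k, lam i * (lstar - β i) = lam i * lstar - lam i * β i :=
        fun i => by ring
      rw [Finset.sum_congr rfl fun i _ => this i, Finset.sum_sub_distrib, ← Finset.sum_mul,
        hbbdef, hΛdef]
    have h3 : Λ * lstar ≤ Λ * m := mul_le_mul_of_nonneg_left hlstar hΛ.le
    linarith
  -- edge decomposition
  set S₁ : Finset V := S₀.erase vstar with hS₁def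
  set A : Fin k → ℝ :=
    fun i => ∑ e ∈ (E i).filter (fun e => e.1 ∈ S₀ ∧ e.2 ∈ S₀), w i e with hAdef
  set B : Fin k → ℝ :=
    fun i => ∑ e ∈ (E i).filter (fun e => e.1 ∈ S₁ ∧ e.2 ∈ S₁), w i e with hBdef
  set Cc : Fin k → ℝ :=
    fun i => ∑ e ∈ (E i).filter
      (fun e => (e.1 ∈ S₀ ∧ e.2 ∈ S₀) ∧ (e.1 = vstar ∨ e.2 = vstar)), w i e with hCcdef
  have hsplit : ∀ i, A i = B i + Cc i := by
    intro i
    rw [hAdef, hBdef, hCcdef]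
    simp only []
    rw [← Finset.sum_filter_add_sum_filter_not ((E i).filter (fun e => e.1 ∈ S₀ ∧ e.2 ∈ S₀))
      (fun e => e.1 = vstar ∨ e.2 = vstar), Finset.filter_filter, Finset.filter_filter, add_comm]
    congr 1
    apply Finset.sum_congr _ (fun _ _ => rfl)
    apply Finset.filter_congr
    intro e _
    simp only [hS₁def, Finset.mem_erase]
    constructor
    · rintro ⟨⟨h1, h2⟩, h3⟩
      push_neg at h3
      exact ⟨⟨h3.1, h1⟩, ⟨h3.2, h2⟩⟩
    · rintro ⟨⟨h1, h2⟩, ⟨h3, h4⟩⟩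
      exact ⟨⟨h2, h4⟩, by push_neg; exact ⟨h1, h3⟩⟩
  have hCD : ∀ i, Cc i ≤ Dv i := by
    intro i
    apply Finset.sum_le_sum_of_subset_of_nonneg
    · intro e he
      rw [Finset.mem_filter] at he ⊢
      exact ⟨he.1, he.2.2⟩
    · intro e he _
      exact (hw i e (Finset.mem_filter.mp he).1).le
  set Ab : ℝ := ∑ i, lam i * (α i * A i) with hAbdef
  set Bb : ℝ := ∑ i, lam i * (α i * B i) with hBbdef
  set Cb : ℝ := ∑ i, lam i * (α i * Cc i) with hCbdef
  have hABC : Ab = Bb + Cb := by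
    rw [hAbdef, hBbdef, hCbdef, ← Finset.sum_add_distrib]
    exact Finset.sum_congr rfl fun i _ => by rw [hsplit i]; ring
  have hCbD : Cb ≤ ∑ i, lam i * (α i * Dv i) :=
    Finset.sum_le_sum fun i _ =>
      mul_le_mul_of_nonneg_left (mul_le_mul_of_nonneg_left (hCD i) (hα i)) (hlam0 i)
  have hgA : g S₀ = Ab / (S₀.card : ℝ) := by
    rw [hgdef, hAbdef]
    simp only [stmt9dens]
    rw [Finset.sum_div]
    exact Finset.sum_congr rfl fun i _ => by rw [hAdef]; ring
  have hgB : g S₁ = Bb / (S₁.card : ℝ) := by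
    rw [hgdef, hBbdef]
    simp only [stmt9dens]
    rw [Finset.sum_div]
    exact Finset.sum_congr rfl fun i _ => by rw [hBdef]; ring
  have hncard : 1 ≤ S₀.card := Finset.card_pos.mpr ⟨vstar, hvS₀⟩
  rcases Nat.lt_or_ge S₀.card 2 with hcard | hcard
  · -- S₀ = {vstar}
    have h1 : S₀.card = 1 := by omega
    have hS₁card : S₁.card = 0 := by
      rw [hS₁def, Finset.card_erase_of_mem hvS₀, h1]
    have hS₁empty : S₁ = ∅ := Finset.card_eq_zero.mp hS₁card
    have hB0 : ∀ i, B i = 0 := by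
      intro i
      rw [hBdef]
      simp [hS₁empty]
    have hBb0 : Bb = 0 := by
      rw [hBbdef]
      exact Finset.sum_eq_zero fun i _ => by rw [hB0 i]; ring
    have hAb1 : g S₀ = Ab := by
      rw [hgA, h1]; norm_num
    have : Ab = Cb := by rw [hABC, hBb0]; ring
    linarith [hgS₀, hDlt, hCbD]
  · -- |S₀| ≥ 2
    have hnR : (2:ℝ) ≤ (S₀.card : ℝ) := by exact_mod_cast hcard
    have hS₁card : (S₁.card : ℝ) = (S₀.card : ℝ) - 1 := by
      rw [hS₁def, Finset.card_erase_of_mem hvS₀]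
      have : (1:ℕ) ≤ S₀.card := hncard
      push_cast [Nat.cast_sub this]
      ring
    have hpos : (0:ℝ) < (S₀.card : ℝ) := by linarith
    have hpos1 : (0:ℝ) < (S₀.card : ℝ) - 1 := by linarith
    -- g S₁ ≤ Λ*m - bb = g S₀ = Ab / n
    have h1 : Bb / ((S₀.card : ℝ) - 1) ≤ Ab / (S₀.card : ℝ) := by
      have := hgT S₁
      rw [hgB, hS₁card] at this
      rw [← hgA]
      linarith [hgS₀]
    have h2 : Bb ≤ Ab / (S₀.card : ℝ) * ((S₀.card : ℝ) - 1) := by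
      exact (div_le_iff₀ hpos1).mp h1
    -- Cb < Ab / n
    have h3 : Cb < Ab / (S₀.card : ℝ) := by
      have := hgS₀
      rw [hgA] at this
      linarith [hCbD, hDlt]
    have h4 : Ab - Ab / (S₀.card : ℝ) = Ab / (S₀.card : ℝ) * ((S₀.card : ℝ) - 1) := by
      rw [mul_sub, mul_one, div_mul_cancel₀ Ab hpos.ne']
    linarith [hABC]
end

section
/- Let ŷ : V → ℝ≥0 with ∑_v ŷ_v = 1 and ŷ_{v*} > 0 for some vertex v*. Define y'_v = ŷ_v/(1−ŷ_{v*}) for v ≠ v* and y'_{v*} = 0, and x'_e = min over endpoints of y'. Then ∑_v y'_v = 1 and for each layer i, ∑_{e∈E_i} w_i(e) x'_e ≥ (∑_{e∈E_i} w_i(e) x̂_e − d_i(v*)·ŷ_{v*})/(1 − ŷ_{v*}), where x̂_e = min over endpoints of ŷ and d_i(v*) = ∑_{e∈E_i: v*∈e} w_i(e). -/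
open Finset

theorem stmt_12 {V : Type*} [Fintype V] [DecidableEq V]
    {k : ℕ}
    (E : Fin k → Finset (V × V)) (w : Fin k → V × V → ℝ)
    (hw : ∀ i, ∀ e ∈ E i, 0 < w i e)
    (y : V → ℝ) (hy : ∀ v, 0 ≤ y v) (hsum : ∑ v, y v = 1)
    (vstar : V) (h0 : 0 < y vstar) (h1 : y vstar < 1) :
    (∑ v : V, (if v = vstar then 0 else y v / (1 - y vstar))) = 1 ∧
    ∀ i,
      (∑ e ∈ E i, w i e *
          min (if e.1 = vstar then 0 else y e.1 / (1 - y vstar))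
              (if e.2 = vstar then 0 else y e.2 / (1 - y vstar))) ≥
        ((∑ e ∈ E i, w i e * min (y e.1) (y e.2)) -
            (∑ e ∈ (E i).filter (fun e => e.1 = vstar ∨ e.2 = vstar), w i e) *
              y vstar) /
          (1 - y vstar) := by
  have hc : 0 < 1 - y vstar := by linarith
  constructor
  · have key : ∀ v : V, (if v = vstar then 0 else y v / (1 - y vstar)) =
        y v / (1 - y vstar) - (if v = vstar then y vstar / (1 - y vstar) else 0) := by
      intro v
      split
      · rename_i h; rw [h]; ring
      · ring
    rw [Finset.sum_congr rfl (fun v _ => key v), Finset.sum_sub_distrib,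
      Finset.sum_ite_eq' Finset.univ vstar, if_pos (Finset.mem_univ vstar),
      ← Finset.sum_div, hsum]
    field_simp
  · intro i
    rw [ge_iff_le, div_le_iff₀ hc, Finset.sum_mul, Finset.sum_mul,
      Finset.sum_filter, ← Finset.sum_sub_distrib]
    apply Finset.sum_le_sum
    intro e he
    have hwe := hw i e he
    have hy1 := hy e.1
    have hy2 := hy e.2
    by_cases hinc : e.1 = vstar ∨ e.2 = vstar
    · rw [if_pos hinc]
      have hmin0 : min (if e.1 = vstar then 0 else y e.1 / (1 - y vstar))
          (if e.2 = vstar then 0 else y e.2 / (1 - y vstar)) = 0 := by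
        rcases hinc with h | h
        · rw [if_pos h]
          have : (0:ℝ) ≤ (if e.2 = vstar then 0 else y e.2 / (1 - y vstar)) := by
            split
            · exact le_refl 0
            · positivity
          exact min_eq_left this
        · rw [if_pos h]
          have : (0:ℝ) ≤ (if e.1 = vstar then 0 else y e.1 / (1 - y vstar)) := by
            split
            · exact le_refl 0
            · positivity
          exact min_eq_right this
      rw [hmin0, mul_zero, zero_mul]
      have hle : min (y e.1) (y e.2) ≤ y vstar := by
        rcases hinc with h | h
        · calc min (y e.1) (y e.2) ≤ y e.1 := min_le_left _ _
            _ = y vstar := by rw [h]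
        · calc min (y e.1) (y e.2) ≤ y e.2 := min_le_right _ _
            _ = y vstar := by rw [h]
      nlinarith
    · push_neg at hinc
      rw [if_neg (by tauto), if_neg hinc.1, if_neg hinc.2,
        min_div_div_right hc.le]
      rw [sub_zero]
      have : w i e * (min (y e.1) (y e.2) / (1 - y vstar)) * (1 - y vstar)
          = w i e * min (y e.1) (y e.2) := by field_simp
      rw [this]
end

section
/- The maximum over probability distributions p on subsets of V of min_{i∈[k]} [α_i ∑_S p_S w_i(S)/|S| + β_i] is attained by a distribution whose support is a chain under inclusion and has size at most |V|. -/
open Finset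


lemma exists_chain {V : Type*} [Fintype V] [DecidableEq V] :
    ∀ (n : ℕ) (y : V → ℝ), (∀ v, 0 ≤ y v) →
      (univ.filter (fun v => y v ≠ 0)).card ≤ n →
      ∃ c : Finset V → ℝ,
        (∀ T, 0 ≤ c T) ∧
        (∀ T, c T ≠ 0 → T.Nonempty) ∧
        (∀ T, c T ≠ 0 → T ⊆ univ.filter (fun v => y v ≠ 0)) ∧
        (∀ T₁ T₂, c T₁ ≠ 0 → c T₂ ≠ 0 → T₁ ⊆ T₂ ∨ T₂ ⊆ T₁) ∧
        (univ.filter (fun T => c T ≠ 0)).card ≤ (univ.filter (fun v => y v ≠ 0)).card ∧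
        (∀ v, ∑ T ∈ univ.filter (fun T => v ∈ T), c T = y v) := by
  intro n
  induction n with
  | zero =>
    intro y hy hcard
    have hsupp : univ.filter (fun v => y v ≠ 0) = ∅ := card_eq_zero.mp (le_antisymm hcard (Nat.zero_le _))
    have hy0 : ∀ v, y v = 0 := by
      intro v
      by_contra h
      have : v ∈ univ.filter (fun v => y v ≠ 0) := by simp [h]
      simp [hsupp] at this
    refine ⟨fun _ => 0, by simp, by simp, by simp, by simp, by simp, ?_⟩
    intro v; simp [hy0 v]
  | succ n ih =>
    intro y hy hcard
    set S₀ : Finset V := univ.filter (fun v => y v ≠ 0) with hS₀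
    by_cases hne : S₀ = ∅
    · have hy0 : ∀ v, y v = 0 := by
        intro v
        by_contra h
        have : v ∈ S₀ := by simp [hS₀, h]
        simp [hne] at this
      refine ⟨fun _ => 0, by simp, by simp, by simp, by simp, by simp, ?_⟩
      intro v; simp [hy0 v]
    · have hS₀ne : S₀.Nonempty := nonempty_of_ne_empty hne
      obtain ⟨a, ha, hamin⟩ := S₀.exists_min_image y hS₀ne
      have hya : 0 < y a := by
        rcases (hy a).lt_or_eq with h | h
        · exact h
        · exfalso; have : y a ≠ 0 := (mem_filter.mp ha).2; exact this h.symm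
      set m : ℝ := y a with hm
      set y' : V → ℝ := fun v => if v ∈ S₀ then y v - m else 0 with hy'
      have hy'nonneg : ∀ v, 0 ≤ y' v := by
        intro v
        simp only [hy']
        split
        · next h => linarith [hamin v h]
        · exact le_refl 0
      have hy'supp : univ.filter (fun v => y' v ≠ 0) ⊆ S₀.erase a := by
        intro v hv
        simp only [mem_filter, hy'] at hv
        rcases hv with ⟨-, hv⟩
        by_cases hvS : v ∈ S₀
        · refine mem_erase.mpr ⟨?_, hvS⟩
          rintro rfl
          simp [hvS, hm] at hv
        · simp [hvS] at hv
      have hcard' : (univ.filter (fun v => y' v ≠ 0)).card ≤ n := by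
        have h1 : (univ.filter (fun v => y' v ≠ 0)).card ≤ (S₀.erase a).card :=
          card_le_card hy'supp
        have h2 : (S₀.erase a).card = S₀.card - 1 := card_erase_of_mem ha
        have h3 : 1 ≤ S₀.card := card_pos.mpr hS₀ne
        omega
      obtain ⟨c', hc'0, hc'ne, hc'sub, hc'chain, hc'card, hc'sum⟩ := ih y' hy'nonneg hcard'
      have hsub' : univ.filter (fun v => y' v ≠ 0) ⊆ S₀ := hy'supp.trans (erase_subset _ _)
      have hc'S₀ : c' S₀ = 0 := by
        by_contra h
        have := (hc'sub S₀ h).trans hy'supp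
        exact (mem_erase.mp (this ha)).1 rfl
      refine ⟨fun T => c' T + if T = S₀ then m else 0, ?_, ?_, ?_, ?_, ?_, ?_⟩
      · intro T
        have := hc'0 T
        simp only []
        split <;> [linarith; linarith]
      · intro T hT
        by_cases h : T = S₀
        · subst h; exact hS₀ne
        · simp only [h, if_false, add_zero] at hT
          exact hc'ne T hT
      · intro T hT
        by_cases h : T = S₀
        · subst h; exact subset_rfl
        · simp only [h, if_false, add_zero] at hT
          exact (hc'sub T hT).trans hsub'
      · intro T₁ T₂ h₁ h₂
        by_cases e₁ : T₁ = S₀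
        · by_cases e₂ : T₂ = S₀
          · subst e₁; subst e₂; exact Or.inl subset_rfl
          · subst e₁
            simp only [e₂, if_false, add_zero] at h₂
            exact Or.inr ((hc'sub T₂ h₂).trans hsub')
        · simp only [e₁, if_false, add_zero] at h₁
          by_cases e₂ : T₂ = S₀
          · subst e₂; exact Or.inl ((hc'sub T₁ h₁).trans hsub')
          · simp only [e₂, if_false, add_zero] at h₂
            exact hc'chain T₁ T₂ h₁ h₂
      · have hsubset : (univ.filter (fun T => (c' T + if T = S₀ then m else 0) ≠ 0))
            ⊆ insert S₀ (univ.filter (fun T => c' T ≠ 0)) := by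
          intro T hT
          simp only [mem_filter, mem_univ, true_and] at hT
          by_cases h : T = S₀
          · subst h; exact mem_insert_self _ _
          · simp only [h, if_false, add_zero] at hT
            exact mem_insert_of_mem (by simp [hT])
        calc (univ.filter (fun T => (c' T + if T = S₀ then m else 0) ≠ 0)).card
            ≤ (insert S₀ (univ.filter (fun T => c' T ≠ 0))).card := card_le_card hsubset
          _ ≤ (univ.filter (fun T => c' T ≠ 0)).card + 1 := card_insert_le _ _
          _ ≤ (univ.filter (fun v => y' v ≠ 0)).card + 1 := by omega
          _ ≤ (S₀.erase a).card + 1 := by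
              have := card_le_card hy'supp; omega
          _ ≤ S₀.card := by
              have h2 : (S₀.erase a).card = S₀.card - 1 := card_erase_of_mem ha
              have h3 : 1 ≤ S₀.card := card_pos.mpr hS₀ne
              omega
      · intro v
        rw [sum_add_distrib]
        have h1 : ∑ T ∈ univ.filter (fun T => v ∈ T), (if T = S₀ then m else 0)
            = if v ∈ S₀ then m else 0 := by
          rw [Finset.sum_ite_eq' (univ.filter (fun T => v ∈ T)) S₀ (fun _ => m)]
          simp
        rw [h1, hc'sum v]
        by_cases h : v ∈ S₀
        · simp only [h, if_true, hy', if_pos h]; ring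
        · have hyv : y v = 0 := by
            by_contra hne2
            exact h (by simp [hS₀, hne2])
          simp [h, hy', hyv]


-- double counting: sum over sets weighted by card = sum over vertices of membership sums
lemma double_count {V : Type*} [Fintype V] [DecidableEq V] (g : Finset V → ℝ) :
    ∑ T : Finset V, g T * (T.card : ℝ)
      = ∑ v : V, ∑ T ∈ univ.filter (fun T => v ∈ T), g T := by
  calc ∑ T : Finset V, g T * (T.card : ℝ)
      = ∑ T : Finset V, ∑ v : V, (if v ∈ T then g T else 0) := by
        refine sum_congr rfl fun T _ => ?_
        rw [Finset.sum_ite_mem, univ_inter, sum_const, nsmul_eq_mul, mul_comm]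
    _ = ∑ v : V, ∑ T : Finset V, (if v ∈ T then g T else 0) := Finset.sum_comm
    _ = ∑ v : V, ∑ T ∈ univ.filter (fun T => v ∈ T), g T := by
        refine sum_congr rfl fun v _ => ?_
        rw [sum_filter]

lemma swap_lemma {V : Type*} [Fintype V] [DecidableEq V]
    (r : Finset V → ℝ) (A : Finset (V × V)) (g : V × V → ℝ) :
    ∑ S : Finset V, r S * (∑ e ∈ A.filter (fun e => e.1 ∈ S ∧ e.2 ∈ S), g e)
      = ∑ e ∈ A, g e * (∑ S ∈ univ.filter (fun S => e.1 ∈ S ∧ e.2 ∈ S), r S) := by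
  calc ∑ S : Finset V, r S * (∑ e ∈ A.filter (fun e => e.1 ∈ S ∧ e.2 ∈ S), g e)
      = ∑ S : Finset V, ∑ e ∈ A, (if e.1 ∈ S ∧ e.2 ∈ S then r S * g e else 0) := by
        refine sum_congr rfl fun S _ => ?_
        rw [sum_filter, mul_sum]
        refine sum_congr rfl fun e _ => ?_
        split <;> simp
    _ = ∑ e ∈ A, ∑ S : Finset V, (if e.1 ∈ S ∧ e.2 ∈ S then r S * g e else 0) :=
        Finset.sum_comm
    _ = ∑ e ∈ A, g e * (∑ S ∈ univ.filter (fun S => e.1 ∈ S ∧ e.2 ∈ S), r S) := by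
        refine sum_congr rfl fun e _ => ?_
        rw [sum_filter, mul_sum]
        refine sum_congr rfl fun S _ => ?_
        split <;> [ring; simp]

lemma transform {V : Type*} [Fintype V] [DecidableEq V] {k : ℕ}
    (E : Fin k → Finset (V × V)) (w : Fin k → V × V → ℝ)
    (hw : ∀ i, ∀ e ∈ E i, 0 < w i e)
    (q : Finset V → ℝ) (hq0 : ∀ S, 0 ≤ q S) (hqe : q ∅ = 0) :
    ∃ p : Finset V → ℝ,
      (∀ S, 0 ≤ p S) ∧
      (∑ S : Finset V, p S = ∑ S : Finset V, q S) ∧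
      (∀ i, (∑ S : Finset V,
                q S * ((∑ e ∈ (E i).filter (fun e => e.1 ∈ S ∧ e.2 ∈ S), w i e) /
                  (S.card : ℝ))) ≤
            (∑ S : Finset V,
                p S * ((∑ e ∈ (E i).filter (fun e => e.1 ∈ S ∧ e.2 ∈ S), w i e) /
                  (S.card : ℝ)))) ∧
      (∀ S T : Finset V, p S ≠ 0 → p T ≠ 0 → S ⊆ T ∨ T ⊆ S) ∧
      (univ.filter (fun S : Finset V => p S ≠ 0)).card ≤ Fintype.card V := by
  classical
  set y : V → ℝ := fun v => ∑ S ∈ univ.filter (fun S => v ∈ S), q S / (S.card : ℝ) with hy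
  have hynn : ∀ v, 0 ≤ y v := by
    intro v
    refine sum_nonneg fun S _ => div_nonneg (hq0 S) (Nat.cast_nonneg _)
  obtain ⟨c, hc0, hcne, hcsub, hcchain, hccard, hcsum⟩ :=
    exists_chain (univ.filter (fun v => y v ≠ 0)).card y hynn le_rfl
  refine ⟨fun T => c T * (T.card : ℝ), ?_, ?_, ?_, ?_, ?_⟩
  · intro T; exact mul_nonneg (hc0 T) (Nat.cast_nonneg _)
  · -- total mass
    rw [double_count c]
    have h1 : ∀ v, ∑ T ∈ univ.filter (fun T => v ∈ T), c T = y v := hcsum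
    calc ∑ v : V, ∑ T ∈ univ.filter (fun T => v ∈ T), c T
        = ∑ v : V, y v := sum_congr rfl fun v _ => h1 v
      _ = ∑ v : V, ∑ S ∈ univ.filter (fun S => v ∈ S), (fun S => q S / (S.card : ℝ)) S := rfl
      _ = ∑ S : Finset V, (q S / (S.card : ℝ)) * (S.card : ℝ) := (double_count _).symm
      _ = ∑ S : Finset V, q S := by
          refine sum_congr rfl fun S _ => ?_
          rcases Nat.eq_zero_or_pos S.card with h | h
          · rw [card_eq_zero] at h
            subst h
            simp [hqe]
          · have : (S.card : ℝ) ≠ 0 := by positivity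
            field_simp
  · -- objective improves in every layer
    intro i
    have hFp : ∑ S : Finset V,
        (c S * (S.card : ℝ)) * ((∑ e ∈ (E i).filter (fun e => e.1 ∈ S ∧ e.2 ∈ S), w i e) /
          (S.card : ℝ))
        = ∑ S : Finset V, c S * (∑ e ∈ (E i).filter (fun e => e.1 ∈ S ∧ e.2 ∈ S), w i e) := by
      refine sum_congr rfl fun S _ => ?_
      by_cases hcS : c S = 0
      · simp [hcS]
      · have hne : S.Nonempty := hcne S hcS
        have hcard : (S.card : ℝ) ≠ 0 := by
          have := card_pos.mpr hne; positivity
        field_simp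
    have hFq : ∑ S : Finset V,
        q S * ((∑ e ∈ (E i).filter (fun e => e.1 ∈ S ∧ e.2 ∈ S), w i e) / (S.card : ℝ))
        = ∑ S : Finset V,
          (q S / (S.card : ℝ)) * (∑ e ∈ (E i).filter (fun e => e.1 ∈ S ∧ e.2 ∈ S), w i e) := by
      refine sum_congr rfl fun S _ => ?_
      ring
    rw [hFq, hFp, swap_lemma (fun S => q S / (S.card : ℝ)) (E i) (w i),
      swap_lemma c (E i) (w i)]
    refine sum_le_sum fun e he => ?_
    refine mul_le_mul_of_nonneg_left ?_ (le_of_lt (hw i e he))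
    -- key edge inequality
    have hLu : ∑ S ∈ univ.filter (fun S => e.1 ∈ S ∧ e.2 ∈ S), q S / (S.card : ℝ) ≤ y e.1 := by
      refine sum_le_sum_of_subset_of_nonneg ?_ ?_
      · intro S hS
        simp only [mem_filter, mem_univ, true_and] at hS ⊢
        exact hS.1
      · intro S _ _
        exact div_nonneg (hq0 S) (Nat.cast_nonneg _)
    have hLv : ∑ S ∈ univ.filter (fun S => e.1 ∈ S ∧ e.2 ∈ S), q S / (S.card : ℝ) ≤ y e.2 := by
      refine sum_le_sum_of_subset_of_nonneg ?_ ?_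
      · intro S hS
        simp only [mem_filter, mem_univ, true_and] at hS ⊢
        exact hS.2
      · intro S _ _
        exact div_nonneg (hq0 S) (Nat.cast_nonneg _)
    have key : ∀ u v : V, (∀ T, c T ≠ 0 → u ∈ T → v ∈ T) →
        ∑ T ∈ univ.filter (fun T => u ∈ T ∧ v ∈ T), c T = y u := by
      intro u v hcase
      rw [← hcsum u]
      refine Finset.sum_subset ?_ ?_
      · intro T hT
        simp only [mem_filter, mem_univ, true_and] at hT ⊢
        exact hT.1
      · intro T hT hT2
        simp only [mem_filter, mem_univ, true_and] at hT hT2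
        by_contra hc
        exact hT2 ⟨hT, hcase T hc hT⟩
    by_cases hcase : ∀ T, c T ≠ 0 → e.1 ∈ T → e.2 ∈ T
    · rw [key e.1 e.2 hcase]
      exact hLu
    · push_neg at hcase
      obtain ⟨T₁, hT₁c, hT₁u, hT₁v⟩ := hcase
      have hcase2 : ∀ T, c T ≠ 0 → e.2 ∈ T → e.1 ∈ T := by
        intro T hTc hvT
        rcases hcchain T T₁ hTc hT₁c with h | h
        · exact absurd (h hvT) hT₁v
        · exact h hT₁u
      have := key e.2 e.1 hcase2
      have heq : univ.filter (fun T : Finset V => e.2 ∈ T ∧ e.1 ∈ T)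
          = univ.filter (fun T : Finset V => e.1 ∈ T ∧ e.2 ∈ T) := by
        refine filter_congr fun T _ => ?_
        simp [and_comm]
      rw [heq] at this
      rw [this]
      exact hLv
  · -- chain
    intro S T hS hT
    have hcS : c S ≠ 0 := fun h => hS (by simp [h])
    have hcT : c T ≠ 0 := fun h => hT (by simp [h])
    exact hcchain S T hcS hcT
  · -- support size
    have hsub : univ.filter (fun T : Finset V => c T * (T.card : ℝ) ≠ 0)
        ⊆ univ.filter (fun T => c T ≠ 0) := by
      intro T hT
      simp only [mem_filter, mem_univ, true_and] at hT ⊢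
      exact fun h => hT (by simp [h])
    calc (univ.filter (fun T : Finset V => c T * (T.card : ℝ) ≠ 0)).card
        ≤ (univ.filter (fun T => c T ≠ 0)).card := card_le_card hsub
      _ ≤ (univ.filter (fun v => y v ≠ 0)).card := hccard
      _ ≤ Fintype.card V := by
          have := card_filter_le (univ : Finset V) (fun v => y v ≠ 0)
          simpa using this

theorem stmt_16 {V : Type*} [Fintype V] [DecidableEq V] [Nonempty V]
    {k : ℕ} [NeZero k]
    (E : Fin k → Finset (V × V)) (w : Fin k → V × V → ℝ)
    (hw : ∀ i, ∀ e ∈ E i, 0 < w i e)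
    (α : Fin k → ℝ) (hα : ∀ i, 0 ≤ α i) (β : Fin k → ℝ) :
    ∃ p : Finset V → ℝ,
      (∀ S, 0 ≤ p S) ∧ (∑ S : Finset V, p S = 1) ∧
      -- p attains the maximum over all probability distributions on subsets
      (∀ q : Finset V → ℝ, (∀ S, 0 ≤ q S) → (∑ S : Finset V, q S = 1) →
        Finset.univ.inf' Finset.univ_nonempty (fun i =>
            α i * (∑ S : Finset V,
                q S * ((∑ e ∈ (E i).filter (fun e => e.1 ∈ S ∧ e.2 ∈ S), w i e) /
                  (S.card : ℝ))) + β i) ≤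
          Finset.univ.inf' Finset.univ_nonempty (fun i =>
            α i * (∑ S : Finset V,
                p S * ((∑ e ∈ (E i).filter (fun e => e.1 ∈ S ∧ e.2 ∈ S), w i e) /
                  (S.card : ℝ))) + β i)) ∧
      -- the support of p is a chain under inclusion
      (∀ S T : Finset V, p S ≠ 0 → p T ≠ 0 → S ⊆ T ∨ T ⊆ S) ∧
      -- the support of p has size at most |V|
      (Finset.univ.filter (fun S : Finset V => p S ≠ 0)).card ≤ Fintype.card V := by
  classical
  set d : Fin k → Finset V → ℝ := fun i S =>
    (∑ e ∈ (E i).filter (fun e => e.1 ∈ S ∧ e.2 ∈ S), w i e) / (S.card : ℝ) with hd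
  set F : Fin k → (Finset V → ℝ) → ℝ := fun i q => ∑ S : Finset V, q S * d i S with hF
  set Φ : (Finset V → ℝ) → ℝ :=
    fun q => Finset.univ.inf' Finset.univ_nonempty (fun i => α i * F i q + β i) with hΦ
  -- maximizer over the standard simplex
  have hcontF : ∀ i, Continuous (F i) := by
    intro i
    exact continuous_finset_sum univ fun S _ => (continuous_apply S).mul continuous_const
  have hcont : Continuous Φ := by
    refine Continuous.finset_inf'_apply univ_nonempty fun i _ => ?_
    exact (continuous_const.mul (hcontF i)).add continuous_const
  have hne : (stdSimplex ℝ (Finset V)).Nonempty := by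
    refine ⟨fun S => if S = (univ : Finset V) then 1 else 0, fun S => ?_, ?_⟩
    · dsimp only
      split <;> norm_num
    · rw [Finset.sum_ite_eq' univ (univ : Finset V) (fun _ => (1 : ℝ))]
      simp
  obtain ⟨q₀, hq₀mem, hq₀max⟩ :=
    (isCompact_stdSimplex ℝ (Finset V)).exists_isMaxOn hne hcont.continuousOn
  obtain ⟨hq₀0, hq₀sum⟩ := hq₀mem
  -- shift the mass on ∅ to univ
  set q₂ : Finset V → ℝ := fun S =>
    q₀ S + (if S = (univ : Finset V) then q₀ ∅ else 0) - (if S = (∅ : Finset V) then q₀ ∅ else 0)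
    with hq₂
  have huniv_ne : (univ : Finset V) ≠ (∅ : Finset V) := by
    simpa using (univ_nonempty : (univ : Finset V).Nonempty).ne_empty
  have hq₂0 : ∀ S, 0 ≤ q₂ S := by
    intro S
    simp only [hq₂]
    by_cases h1 : S = (univ : Finset V)
    · subst h1
      simp only [if_pos rfl, if_neg huniv_ne, sub_zero]
      exact add_nonneg (hq₀0 _) (hq₀0 _)
    · by_cases h2 : S = (∅ : Finset V)
      · subst h2
        simp [h1]
      · simp only [if_neg h1, if_neg h2, add_zero, sub_zero]
        exact hq₀0 S
  have hq₂e : q₂ ∅ = 0 := by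
    simp [hq₂, Ne.symm huniv_ne]
  have hq₂sum : ∑ S : Finset V, q₂ S = 1 := by
    simp only [hq₂]
    rw [sum_sub_distrib, sum_add_distrib,
      Finset.sum_ite_eq' univ (univ : Finset V) (fun _ => q₀ ∅),
      Finset.sum_ite_eq' univ (∅ : Finset V) (fun _ => q₀ ∅)]
    simp [hq₀sum]
  have hFq₂ : ∀ i, F i q₀ ≤ F i q₂ := by
    intro i
    have hde : d i ∅ = 0 := by
      simp only [hd, card_empty, Nat.cast_zero, div_zero]
    have hdu : 0 ≤ d i (univ : Finset V) := by
      refine div_nonneg (sum_nonneg fun e he => ?_) (Nat.cast_nonneg _)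
      exact (hw i e (mem_of_mem_filter e he)).le
    have e1 : ∀ S : Finset V, q₂ S * d i S
        = q₀ S * d i S + (if S = (univ : Finset V) then q₀ ∅ * d i S else 0)
          - (if S = (∅ : Finset V) then q₀ ∅ * d i S else 0) := by
      intro S
      simp only [hq₂]
      split_ifs <;> ring
    have e2 : (∑ S : Finset V, (if S = (univ : Finset V) then q₀ ∅ * d i S else 0))
        = q₀ ∅ * d i (univ : Finset V) := by
      rw [Finset.sum_ite_eq' univ (univ : Finset V) (fun S => q₀ ∅ * d i S)]
      simp
    have e3 : (∑ S : Finset V, (if S = (∅ : Finset V) then q₀ ∅ * d i S else 0))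
        = q₀ ∅ * d i (∅ : Finset V) := by
      rw [Finset.sum_ite_eq' univ (∅ : Finset V) (fun S => q₀ ∅ * d i S)]
      simp
    have expand : F i q₂ = F i q₀ + q₀ ∅ * d i (univ : Finset V) := by
      calc F i q₂ = ∑ S : Finset V,
            (q₀ S * d i S + (if S = (univ : Finset V) then q₀ ∅ * d i S else 0)
              - (if S = (∅ : Finset V) then q₀ ∅ * d i S else 0)) :=
            sum_congr rfl fun S _ => e1 S
        _ = (∑ S : Finset V, q₀ S * d i S)
            + (∑ S : Finset V, (if S = (univ : Finset V) then q₀ ∅ * d i S else 0))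
            - (∑ S : Finset V, (if S = (∅ : Finset V) then q₀ ∅ * d i S else 0)) := by
            rw [sum_sub_distrib, sum_add_distrib]
        _ = F i q₀ + q₀ ∅ * d i (univ : Finset V) := by
            rw [e2, e3, hde]; ring
    rw [expand]
    nlinarith [mul_nonneg (hq₀0 ∅) hdu]
  obtain ⟨p, hp0, hpsum, hpF, hpchain, hpcard⟩ := transform E w hw q₂ hq₂0 hq₂e
  refine ⟨p, hp0, by rw [hpsum, hq₂sum], ?_, hpchain, hpcard⟩
  intro q hq0 hqsum
  have h1 : Φ q ≤ Φ q₀ := hq₀max ⟨hq0, hqsum⟩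
  have h2 : Φ q₀ ≤ Φ p := by
    refine Finset.le_inf' _ _ fun i _ => ?_
    calc Φ q₀ ≤ α i * F i q₀ + β i := Finset.inf'_le _ (mem_univ i)
      _ ≤ α i * F i p + β i := by
          have := (hFq₂ i).trans (hpF i)
          nlinarith [hα i, this]
  exact h1.trans h2
end
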